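/- arXiv:2301.12091 — 5 statements merged into one kernel-verified Lean document; each statement's English description precedes it below -/
import Mathlib

section
/- For positive reals n_A, n_B, α and nonnegative constants L_A, L_B, σ_A², σ_B², define the team error E(n_A, n_B) = [n_B^{2α}·(L_B + σ_B²) + n_A^{2α}·(L_A + σ_A²)] / (n_A^α + n_B^α)². Then for fixed n_A > 0, the function n_B ↦ E(n_A, n_B) on (0, ∞) attains its unique minimum at n_B* = n_A · ((L_A + σ_A²)/(L_B + σ_B²))^{1/α}, provided L_A + σ_A² > 0 and L_B + σ_B² > 0. -/
open Real

lemma aux_min (a b A B : ℝ) (ha : 0 < a) (hb : 0 < b) (hA : 0 < A) (hB : 0 < B)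
    (hne : B * b ≠ A * a) :
    A * B / (A + B) < (B * b ^ 2 + A * a ^ 2) / (a + b) ^ 2 := by
  rw [div_lt_div_iff₀ (by positivity) (by positivity)]
  have h : 0 < (B * b - A * a) ^ 2 := by
    have := sub_ne_zero.mpr hne
    positivity
  nlinarith [h]

/-- the accuracy loss `E(n_A, ·)` attains its unique minimum on `(0,∞)`
at `n_B* = n_A · ((L_A+σ_A²)/(L_B+σ_B²))^(1/α)`. -/
theorem stmt_0 (nA α LA LB sA2 sB2 : ℝ)
    (hnA : 0 < nA) (hα : 0 < α)
    (hLA : 0 ≤ LA) (hLB : 0 ≤ LB) (hsA : 0 ≤ sA2) (hsB : 0 ≤ sB2)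
    (hA : 0 < LA + sA2) (hB : 0 < LB + sB2)
    (E : ℝ → ℝ → ℝ)
    (hE : ∀ x y : ℝ, E x y =
      (y ^ (2 * α) * (LB + sB2) + x ^ (2 * α) * (LA + sA2)) / (x ^ α + y ^ α) ^ 2)
    (nBstar : ℝ) (hstar : nBstar = nA * ((LA + sA2) / (LB + sB2)) ^ (α⁻¹)) :
    ∀ nB : ℝ, 0 < nB → nB ≠ nBstar → E nA nBstar < E nA nB := by
  intro nB hnB hne
  set A := LA + sA2 with hAdef
  set B := LB + sB2 with hBdef
  have hdiv : 0 < A / B := div_pos hA hB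
  have hstarpos : 0 < nBstar := by
    rw [hstar]; exact mul_pos hnA (rpow_pos_of_pos hdiv _)
  have ha : 0 < nA ^ α := rpow_pos_of_pos hnA α
  have hb : 0 < nB ^ α := rpow_pos_of_pos hnB α
  have hbs : nBstar ^ α = nA ^ α * (A / B) := by
    rw [hstar, mul_rpow hnA.le (rpow_pos_of_pos hdiv _).le,
      ← rpow_mul hdiv.le, inv_mul_cancel₀ (ne_of_gt hα), rpow_one]
  -- rewrite 2α powers
  have hsq : ∀ x : ℝ, 0 < x → x ^ (2 * α) = (x ^ α) ^ 2 := by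
    intro x hx
    rw [mul_comm, rpow_mul hx.le]
    norm_num
  have hkey : B * nB ^ α ≠ A * nA ^ α := by
    intro h
    apply hne
    have h1 : nB ^ α = nBstar ^ α := by
      rw [hbs]
      field_simp at h ⊢
      linarith [h]
    have h2 : (nB ^ α) ^ α⁻¹ = (nBstar ^ α) ^ α⁻¹ := by rw [h1]
    rwa [← rpow_mul hnB.le, ← rpow_mul hstarpos.le, mul_inv_cancel₀ (ne_of_gt hα),
      rpow_one, rpow_one] at h2
  rw [hE, hE, hsq _ hnA, hsq _ hnB, hsq _ hstarpos, hbs]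
  have hval : (nA ^ α * (A / B)) ^ 2 * B + (nA ^ α) ^ 2 * A = 
      ((nA ^ α) ^ 2 * (A * (A + B))) / B := by
    field_simp
  have hden : (nA ^ α + nA ^ α * (A / B)) ^ 2 = (nA ^ α) ^ 2 * (A + B) ^ 2 / B ^ 2 := by
    field_simp; ring
  rw [hval, hden]
  have hleft : (nA ^ α) ^ 2 * (A * (A + B)) / B / ((nA ^ α) ^ 2 * (A + B) ^ 2 / B ^ 2) = 
      A * B / (A + B) := by
    field_simp
  rw [hleft, show (nB ^ α) ^ 2 * B + (nA ^ α) ^ 2 * A = B * (nB ^ α) ^ 2 + A * (nA ^ α) ^ 2 from by ring]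
  exact aux_min (nA ^ α) (nB ^ α) A B ha hb hA hB hkey
end

section
/- Let α > 0, and let L_A, L_B, σ_A², σ_B² be nonnegative with L_A + σ_A² > 0 and L_B + σ_B² > 0. Define E(n_A, n_B) = [n_B^{2α}(L_B+σ_B²) + n_A^{2α}(L_A+σ_A²)]/(n_A^α+n_B^α)² for n_A, n_B > 0. Then at every point (n_A, n_B) with n_A, n_B > 0, the partial derivatives ∂E/∂n_A and ∂E/∂n_B have opposite signs or are both zero; in particular it is never the case that both partial derivatives are strictly negative. -/
/-!
The error `E` is homogeneous of degree `0`: scaling both team sizes by `t > 0` scales every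
`n ^ α` by `t ^ α`, which cancels between numerator and denominator. Euler's relation
`n_A ∂E/∂n_A + n_B ∂E/∂n_B = 0` then forces the two partial derivatives to have opposite
signs (or both vanish), since `n_A, n_B > 0`.
-/

open Real

noncomputable def teamError (α p q x y : ℝ) : ℝ :=
  (y ^ (2 * α) * q + x ^ (2 * α) * p) / (x ^ α + y ^ α) ^ 2

lemma teamError_comm (α p q x y : ℝ) : teamError α p q x y = teamError α q p y x := by
  unfold teamError
  ring

lemma hasDerivAt_teamError_left (α p q : ℝ) {x y : ℝ} (hx : 0 < x) (hy : 0 < y) :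
    HasDerivAt (fun x => teamError α p q x y)
      (2 * α * x ^ α * y ^ α * (p * x ^ α - q * y ^ α) / (x * (x ^ α + y ^ α) ^ 3)) x := by
  have hnum : HasDerivAt (fun x => y ^ (2 * α) * q + x ^ (2 * α) * p)
      (2 * α * x ^ (2 * α - 1) * p) x :=
    ((hasDerivAt_rpow_const (Or.inl hx.ne')).mul_const p).const_add _
  have hden : HasDerivAt (fun x => (x ^ α + y ^ α) ^ 2)
      (2 * (x ^ α + y ^ α) ^ 1 * (α * x ^ (α - 1))) x := by
    simpa using ((hasDerivAt_rpow_const (p := α) (Or.inl hx.ne')).add_const (y ^ α)).fun_pow 2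
  refine (hnum.div hden (by positivity)).congr_deriv ?_
  have h2α (z : ℝ) (hz : 0 < z) : z ^ (2 * α) = (z ^ α) ^ 2 := by
    rw [mul_comm, rpow_mul hz.le, rpow_two]
  rw [h2α x hx, h2α y hy, rpow_sub hx, rpow_sub hx, rpow_one, h2α x hx]
  field_simp
  ring

lemma mul_deriv_teamError_left (α p q : ℝ) {x y : ℝ} (hx : 0 < x) (hy : 0 < y) :
    x * deriv (fun x => teamError α p q x y) x
      = 2 * α * x ^ α * y ^ α * (p * x ^ α - q * y ^ α) / (x ^ α + y ^ α) ^ 3 := by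
  rw [(hasDerivAt_teamError_left α p q hx hy).deriv]
  field_simp

theorem teamError_euler (α p q : ℝ) {x y : ℝ} (hx : 0 < x) (hy : 0 < y) :
    x * deriv (fun x => teamError α p q x y) x + y * deriv (fun y => teamError α p q x y) y
      = 0 := by
  simp_rw [teamError_comm α p q x]
  rw [mul_deriv_teamError_left α p q hx hy, mul_deriv_teamError_left α q p hy hx, add_comm (y ^ α)]
  ring

lemma sign_cases_of_mul_add_mul_eq_zero {a b u v : ℝ} (ha : 0 < a) (hb : 0 < b)
    (h : a * u + b * v = 0) :
    ((u < 0 ∧ 0 < v) ∨ (0 < u ∧ v < 0) ∨ (u = 0 ∧ v = 0)) ∧ ¬ (u < 0 ∧ v < 0) := by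
  refine ⟨?_, fun ⟨hu, hv⟩ => by nlinarith⟩
  rcases lt_trichotomy u 0 with hu | rfl | hu
  · exact Or.inl ⟨hu, by nlinarith⟩
  · exact Or.inr (Or.inr ⟨rfl, by simpa [hb.ne'] using h⟩)
  · exact Or.inr (Or.inl ⟨hu, by nlinarith⟩)

theorem stmt_1_general (α LA LB sA2 sB2 : ℝ)
    (E : ℝ → ℝ → ℝ)
    (hE : ∀ x y : ℝ, E x y =
      (y ^ (2 * α) * (LB + sB2) + x ^ (2 * α) * (LA + sA2)) / (x ^ α + y ^ α) ^ 2) :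
    ∀ nA nB : ℝ, 0 < nA → 0 < nB →
      ((deriv (fun x => E x nB) nA < 0 ∧ 0 < deriv (fun y => E nA y) nB) ∨
       (0 < deriv (fun x => E x nB) nA ∧ deriv (fun y => E nA y) nB < 0) ∨
       (deriv (fun x => E x nB) nA = 0 ∧ deriv (fun y => E nA y) nB = 0)) ∧
      ¬ (deriv (fun x => E x nB) nA < 0 ∧ deriv (fun y => E nA y) nB < 0) := by
  intro nA nB hnA hnB
  obtain rfl : E = teamError α (LA + sA2) (LB + sB2) := funext₂ hE
  exact sign_cases_of_mul_add_mul_eq_zero hnA hnB (teamError_euler α _ _ hnA hnB)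

/-- at every point the two partial derivatives of the team error have
opposite signs or are both zero; in particular they are never both strictly negative. -/
theorem stmt_1 (α LA LB sA2 sB2 : ℝ)
    (hα : 0 < α)
    (hLA : 0 ≤ LA) (hLB : 0 ≤ LB) (hsA : 0 ≤ sA2) (hsB : 0 ≤ sB2)
    (hA : 0 < LA + sA2) (hB : 0 < LB + sB2)
    (E : ℝ → ℝ → ℝ)
    (hE : ∀ x y : ℝ, E x y =
      (y ^ (2 * α) * (LB + sB2) + x ^ (2 * α) * (LA + sA2)) / (x ^ α + y ^ α) ^ 2) :
    ∀ nA nB : ℝ, 0 < nA → 0 < nB →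
      ((deriv (fun x => E x nB) nA < 0 ∧ 0 < deriv (fun y => E nA y) nB) ∨
       (0 < deriv (fun x => E x nB) nA ∧ deriv (fun y => E nA y) nB < 0) ∨
       (deriv (fun x => E x nB) nA = 0 ∧ deriv (fun y => E nA y) nB = 0)) ∧
      ¬ (deriv (fun x => E x nB) nA < 0 ∧ deriv (fun y => E nA y) nB < 0) :=
  stmt_1_general α LA LB sA2 sB2 E hE
end

section
/- Fix α > 0 and constants L_A + σ_A² > 0, L_B + σ_B² > 0, and set c = ((L_A+σ_A²)/(L_B+σ_B²))^{1/α}. For E(n_A,n_B) = [n_B^{2α}(L_B+σ_B²) + n_A^{2α}(L_A+σ_A²)]/(n_A^α+n_B^α)², the partial derivative ∂E/∂n_B(n_A, n_B) equals (2α n_B^{α-1} n_A^α)/(n_A^α+n_B^α)³ · (n_B^α(L_B+σ_B²) − n_A^α(L_A+σ_A²)); hence ∂E/∂n_B < 0 if n_B < c·n_A and ∂E/∂n_B > 0 if n_B > c·n_A. -/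
open Real

/-! Writing `u = n_B^α`, `v = n_A^α`, `A = L_A + σ_A²`, `B = L_B + σ_B²`, the error is `(u² B + v² A) / (u + v)²`, whose derivative in `u`
is `2 v (u B - v A) / (u + v)³`; the chain rule contributes the positive factor `α n_B^(α-1)`.
So the sign of `∂E/∂n_B` is that of `n_B^α B - n_A^α A`, and since `t ↦ t^α` is strictly increasing
this changes exactly at `n_B = (A / B)^(1/α) n_A`. -/

noncomputable def teamMSE (α A B x y : ℝ) : ℝ :=
  (y ^ (2 * α) * B + x ^ (2 * α) * A) / (x ^ α + y ^ α) ^ 2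

theorem hasDerivAt_teamMSE (α A B : ℝ) {x y : ℝ} (hx : 0 < x) (hy : 0 < y) :
    HasDerivAt (teamMSE α A B x)
      (2 * α * y ^ (α - 1) * x ^ α / (x ^ α + y ^ α) ^ 3 * (y ^ α * B - x ^ α * A)) y := by
  have hnum : HasDerivAt (fun t : ℝ => t ^ (2 * α) * B + x ^ (2 * α) * A)
      (2 * α * y ^ (2 * α - 1) * B) y :=
    ((hasDerivAt_rpow_const (Or.inl hy.ne')).mul_const B).add_const _
  have hden : HasDerivAt (fun t : ℝ => (x ^ α + t ^ α) ^ 2)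
      (2 * (x ^ α + y ^ α) ^ (2 - 1) * (α * y ^ (α - 1))) y :=
    ((hasDerivAt_rpow_const (Or.inl hy.ne')).const_add (x ^ α)).pow 2
  refine (hnum.div hden (by positivity)).congr_deriv ?_
  have hy2 : y ^ (2 * α) = y ^ α * y ^ α := by rw [← rpow_add hy]; ring_nf
  have hx2 : x ^ (2 * α) = x ^ α * x ^ α := by rw [← rpow_add hx]; ring_nf
  have hy1 : y ^ (2 * α - 1) = y ^ α * y ^ (α - 1) := by rw [← rpow_add hy]; ring_nf
  rw [hy2, hx2, hy1]
  field_simp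
  ring

section RpowInv

variable {α r x y : ℝ}

theorem lt_rpow_inv_mul_iff (hα : 0 < α) (hr : 0 ≤ r) (hx : 0 ≤ x) (hy : 0 ≤ y) :
    y < r ^ α⁻¹ * x ↔ y ^ α < r * x ^ α := by
  rw [← rpow_lt_rpow_iff hy (by positivity) hα, mul_rpow (by positivity) hx,
    rpow_inv_rpow hr hα.ne']

theorem rpow_inv_mul_lt_iff (hα : 0 < α) (hr : 0 ≤ r) (hx : 0 ≤ x) (hy : 0 ≤ y) :
    r ^ α⁻¹ * x < y ↔ r * x ^ α < y ^ α := by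
  rw [← rpow_lt_rpow_iff (by positivity) hy hα, mul_rpow (by positivity) hx,
    rpow_inv_rpow hr hα.ne']

end RpowInv

theorem stmt_2_general (α LA LB sA2 sB2 : ℝ)
    (hα : 0 < α)
    (hA : 0 < LA + sA2) (hB : 0 < LB + sB2)
    (c : ℝ) (hc : c = ((LA + sA2) / (LB + sB2)) ^ (α⁻¹))
    (E : ℝ → ℝ → ℝ)
    (hE : ∀ x y : ℝ, E x y =
      (y ^ (2 * α) * (LB + sB2) + x ^ (2 * α) * (LA + sA2)) / (x ^ α + y ^ α) ^ 2) :
    ∀ nA nB : ℝ, 0 < nA → 0 < nB →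
      deriv (fun y => E nA y) nB =
        (2 * α * nB ^ (α - 1) * nA ^ α) / (nA ^ α + nB ^ α) ^ 3 *
          (nB ^ α * (LB + sB2) - nA ^ α * (LA + sA2)) ∧
      (nB < c * nA → deriv (fun y => E nA y) nB < 0) ∧
      (c * nA < nB → 0 < deriv (fun y => E nA y) nB) := by
  intro nA nB hnA hnB
  have hE' : (fun y => E nA y) = teamMSE α (LA + sA2) (LB + sB2) nA := funext (hE nA)
  rw [hE', (hasDerivAt_teamMSE α _ _ hnA hnB).deriv]
  have hfactor : 0 < 2 * α * nB ^ (α - 1) * nA ^ α / (nA ^ α + nB ^ α) ^ 3 := by positivity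
  have hratio : 0 ≤ (LA + sA2) / (LB + sB2) := (div_pos hA hB).le
  refine ⟨rfl, fun hlt => mul_neg_of_pos_of_neg hfactor ?_, fun hlt => mul_pos hfactor ?_⟩
  · rw [hc, lt_rpow_inv_mul_iff hα hratio hnA.le hnB.le, div_mul_eq_mul_div,
      lt_div_iff₀ hB] at hlt
    linarith
  · rw [hc, rpow_inv_mul_lt_iff hα hratio hnA.le hnB.le, div_mul_eq_mul_div,
      div_lt_iff₀ hB] at hlt
    linarith

/-- explicit formula for `∂E/∂n_B` and the resulting sign pattern around
`n_B = c · n_A` with `c = ((L_A+σ_A²)/(L_B+σ_B²))^(1/α)`. -/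
theorem stmt_2 (α LA LB sA2 sB2 : ℝ)
    (hα : 0 < α)
    (hLA : 0 ≤ LA) (hLB : 0 ≤ LB) (hsA : 0 ≤ sA2) (hsB : 0 ≤ sB2)
    (hA : 0 < LA + sA2) (hB : 0 < LB + sB2)
    (c : ℝ) (hc : c = ((LA + sA2) / (LB + sB2)) ^ (α⁻¹))
    (E : ℝ → ℝ → ℝ)
    (hE : ∀ x y : ℝ, E x y =
      (y ^ (2 * α) * (LB + sB2) + x ^ (2 * α) * (LA + sA2)) / (x ^ α + y ^ α) ^ 2) :
    ∀ nA nB : ℝ, 0 < nA → 0 < nB →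
      deriv (fun y => E nA y) nB =
        (2 * α * nB ^ (α - 1) * nA ^ α) / (nA ^ α + nB ^ α) ^ 3 *
          (nB ^ α * (LB + sB2) - nA ^ α * (LA + sA2)) ∧
      (nB < c * nA → deriv (fun y => E nA y) nB < 0) ∧
      (c * nA < nB → 0 < deriv (fun y => E nA y) nB) :=
  stmt_2_general α LA LB sA2 sB2 hα hA hB c hc E hE
end

section
/- Let λ ∈ (0, 1) and L_A, L_B > 0, and fix n_A > 0. Define the cost C(n_B) = λ · 2 n_A n_B (L_A + L_B)/(n_A + n_B) + (1−λ) · [n_B² L_B + n_A² L_A]/(n_A + n_B)² for n_B ≥ 0 (this is the team disutility with α = 1, β = 0, and no noise). Then C′(n_B) = 0 if and only if λ(L_A+L_B) n_A (n_A+n_B) + (1−λ)(n_B L_B − n_A L_A) = 0, which (when a nonnegative solution exists) gives the unique minimizer n_B* = [λ(L_A+L_B)n_A² − (1−λ)L_A n_A] / [−λ(L_A+L_B)n_A − (1−λ)L_B], and moreover any such minimizer satisfies n_B* < n_A · L_A/L_B. -/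
open Real

/-!
The derivative of the cost factors as `2 n_A / (n_A + n_B)³` times the first-order expression,
which is affine in `n_B` with positive slope `λ (L_A + L_B) n_A + (1 - λ) L_B` and root `n_B*`.
Hence the cost decreases strictly up to `n_B*` and increases strictly after it. Finally
`n_A L_A - n_B* L_B = λ (L_A + L_B)² n_A² / slope > 0`.
-/

theorem lt_of_hasDerivAt_neg_left_pos_right {f f' : ℝ → ℝ} {a c : ℝ} (hac : a ≤ c)
    (hf : ∀ y, a ≤ y → HasDerivAt f (f' y) y)
    (hneg : ∀ y, a < y → y < c → f' y < 0) (hpos : ∀ y, c < y → 0 < f' y)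
    {y : ℝ} (hy : a ≤ y) (hyc : y ≠ c) : f c < f y := by
  have hcont : ContinuousOn f (Set.Ici a) := fun x hx =>
    (hf x hx).continuousAt.continuousWithinAt
  rcases hyc.lt_or_gt with hlt | hgt
  · have hanti : StrictAntiOn f (Set.Icc a c) := by
      refine strictAntiOn_of_deriv_neg (convex_Icc a c) (hcont.mono Set.Icc_subset_Ici_self) ?_
      intro x hx
      rw [interior_Icc] at hx
      rw [(hf x hx.1.le).deriv]
      exact hneg x hx.1 hx.2
    exact hanti ⟨hy, hlt.le⟩ ⟨hac, le_rfl⟩ hlt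
  · have hmono : StrictMonoOn f (Set.Ici c) := by
      refine strictMonoOn_of_deriv_pos (convex_Ici c) (hcont.mono (Set.Ici_subset_Ici.2 hac)) ?_
      intro x hx
      rw [interior_Ici] at hx
      rw [(hf x (hac.trans hx.le)).deriv]
      exact hpos x hx
    exact hmono Set.self_mem_Ici hgt.le hgt

section TeamCost

variable (lam LA LB nA : ℝ)

theorem hasDerivAt_teamCost {y : ℝ} (hy : nA + y ≠ 0) :
    HasDerivAt (fun x : ℝ => lam * (2 * nA * x * (LA + LB) / (nA + x)) +
        (1 - lam) * ((x ^ 2 * LB + nA ^ 2 * LA) / (nA + x) ^ 2))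
      (2 * nA / (nA + y) ^ 3 *
        (lam * (LA + LB) * nA * (nA + y) + (1 - lam) * (y * LB - nA * LA))) y := by
  have hden : HasDerivAt (fun x : ℝ => nA + x) 1 y := (hasDerivAt_id y).const_add nA
  have hshare : HasDerivAt (fun x : ℝ => 2 * nA * x * (LA + LB) / (nA + x))
      ((2 * nA * 1 * (LA + LB) * (nA + y) - 2 * nA * y * (LA + LB) * 1) / (nA + y) ^ 2) y :=
    (((hasDerivAt_id y).const_mul (2 * nA)).mul_const (LA + LB)).div hden hy
  have hloss : HasDerivAt (fun x : ℝ => (x ^ 2 * LB + nA ^ 2 * LA) / (nA + x) ^ 2)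
      ((2 * y ^ 1 * LB * (nA + y) ^ 2 - (y ^ 2 * LB + nA ^ 2 * LA) * (2 * (nA + y) ^ 1 * 1))
        / ((nA + y) ^ 2) ^ 2) y :=
    (((hasDerivAt_pow 2 y).mul_const LB).add_const _).div (hden.pow 2) (pow_ne_zero 2 hy)
  refine ((hshare.const_mul lam).add (hloss.const_mul (1 - lam))).congr_deriv ?_
  field_simp
  ring

theorem firstOrder_eq_mul_sub (hs : lam * (LA + LB) * nA + (1 - lam) * LB ≠ 0) (y : ℝ) :
    lam * (LA + LB) * nA * (nA + y) + (1 - lam) * (y * LB - nA * LA) =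
      (lam * (LA + LB) * nA + (1 - lam) * LB) *
        (y - (lam * (LA + LB) * nA ^ 2 - (1 - lam) * LA * nA) /
          (-(lam * (LA + LB) * nA) - (1 - lam) * LB)) := by
  rw [← neg_add', div_neg, sub_neg_eq_add]
  set s := lam * (LA + LB) * nA + (1 - lam) * LB
  field_simp
  ring

theorem minimizer_lt_accuracyOptimal {lam LA LB nA : ℝ} (hlam0 : 0 < lam) (hLA : 0 < LA)
    (hLB : 0 < LB) (hnA : 0 < nA) (hs : 0 < lam * (LA + LB) * nA + (1 - lam) * LB) :
    (lam * (LA + LB) * nA ^ 2 - (1 - lam) * LA * nA) /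
      (-(lam * (LA + LB) * nA) - (1 - lam) * LB) < nA * (LA / LB) := by
  have hgap : nA * (LA / LB) - (lam * (LA + LB) * nA ^ 2 - (1 - lam) * LA * nA) /
      (-(lam * (LA + LB) * nA) - (1 - lam) * LB) =
        lam * (LA + LB) ^ 2 * nA ^ 2 / (LB * (lam * (LA + LB) * nA + (1 - lam) * LB)) := by
    rw [← neg_add', div_neg, sub_neg_eq_add]
    set s := lam * (LA + LB) * nA + (1 - lam) * LB
    field_simp
    ring
  have : 0 < lam * (LA + LB) ^ 2 * nA ^ 2 / (LB * (lam * (LA + LB) * nA + (1 - lam) * LB)) := by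
    positivity
  linarith

end TeamCost

/-- first-order condition for the `α = 1, β = 0` disutility, the resulting
closed-form unique minimizer, and the fact that it falls short of the
accuracy-optimal count `n_A · L_A/L_B`. -/
theorem stmt_6 (lam LA LB nA : ℝ)
    (hlam0 : 0 < lam) (hlam1 : lam < 1)
    (hLA : 0 < LA) (hLB : 0 < LB) (hnA : 0 < nA)
    (C : ℝ → ℝ)
    (hC : ∀ y : ℝ, C y =
      lam * (2 * nA * y * (LA + LB) / (nA + y)) +
      (1 - lam) * ((y ^ 2 * LB + nA ^ 2 * LA) / (nA + y) ^ 2))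
    (nBstar : ℝ)
    (hstar : nBstar = (lam * (LA + LB) * nA ^ 2 - (1 - lam) * LA * nA) /
      (-(lam * (LA + LB) * nA) - (1 - lam) * LB)) :
    (∀ nB : ℝ, 0 ≤ nB →
      (deriv C nB = 0 ↔
        lam * (LA + LB) * nA * (nA + nB) + (1 - lam) * (nB * LB - nA * LA) = 0)) ∧
    (0 ≤ nBstar →
      (∀ nB : ℝ, 0 ≤ nB → nB ≠ nBstar → C nBstar < C nB) ∧
      nBstar < nA * (LA / LB)) := by
  obtain rfl : C = _ := funext hC
  have hfactor (y : ℝ) (hy : 0 ≤ y) : 0 < 2 * nA / (nA + y) ^ 3 := by positivity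
  have hderiv (y : ℝ) (hy : 0 ≤ y) := hasDerivAt_teamCost lam LA LB nA (y := y) (by positivity)
  have hslope : 0 < lam * (LA + LB) * nA + (1 - lam) * LB := by
    have : 0 < 1 - lam := sub_pos.2 hlam1
    positivity
  have hfirst := firstOrder_eq_mul_sub lam LA LB nA hslope.ne'
  rw [← hstar] at hfirst
  refine ⟨fun nB hnB => ?_, fun hns => ⟨fun nB hnB hne => ?_, hstar ▸
    minimizer_lt_accuracyOptimal hlam0 hLA hLB hnA hslope⟩⟩
  · rw [(hderiv nB hnB).deriv, mul_eq_zero, or_iff_right (hfactor nB hnB).ne']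
  · refine lt_of_hasDerivAt_neg_left_pos_right hns hderiv (fun y hy hyc => ?_) (fun y hyc => ?_) hnB hne
    · rw [hfirst]
      exact mul_neg_of_pos_of_neg (hfactor y hy.le) (mul_neg_of_pos_of_neg hslope (by linarith))
    · rw [hfirst]
      exact mul_pos (hfactor y (hns.trans hyc.le)) (mul_pos hslope (by linarith))
end

section
/- Let L_A, L_B > 0 and α > 0, and define the accuracy loss along the ray n_B = t·n_A (t > 0) by E(t) = [t^{2α} L_B + L_A]/(1 + t^α)². Then E is strictly decreasing on (0, (L_A/L_B)^{1/α}) and strictly increasing on ((L_A/L_B)^{1/α}, ∞), and E attains its minimum value (L_A·L_B)/(L_A + L_B) at t* = (L_A/L_B)^{1/α}. -/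
open Real

lemma spow_aux (t α : ℝ) (ht : 0 < t) : t ^ (2 * α) = (t ^ α) ^ 2 := by
  rw [show (2:ℝ) * α = α * 2 by ring, Real.rpow_mul ht.le]
  norm_num

lemma f_anti (LA LB s1 s2 : ℝ) (hLA : 0 < LA) (hLB : 0 < LB)
    (h1 : 0 < s1) (h12 : s1 < s2) (h2 : s2 * LB ≤ LA) :
    (s2 ^ 2 * LB + LA) / (1 + s2) ^ 2 < (s1 ^ 2 * LB + LA) / (1 + s1) ^ 2 := by
  have h2pos : 0 < s2 := h1.trans h12
  have d1 : (0:ℝ) < (1 + s1) ^ 2 := by positivity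
  have d2 : (0:ℝ) < (1 + s2) ^ 2 := by positivity
  rw [div_lt_div_iff₀ d2 d1]
  have hs1 : s1 * LB < LA := lt_of_lt_of_le (by nlinarith) h2
  nlinarith [mul_pos h1 h2pos, sub_pos.mpr h12,
    mul_lt_mul_of_pos_right hs1 (sub_pos.mpr h12),
    mul_le_mul_of_nonneg_right h2 (sub_pos.mpr h12).le,
    mul_lt_mul_of_pos_right hs1 (mul_pos h2pos (sub_pos.mpr h12)),
    mul_le_mul_of_nonneg_right h2 (mul_pos h1 (sub_pos.mpr h12)).le]

lemma f_mono (LA LB s1 s2 : ℝ) (hLA : 0 < LA) (hLB : 0 < LB)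
    (h1 : 0 < s1) (h12 : s1 < s2) (h2 : LA ≤ s1 * LB) :
    (s1 ^ 2 * LB + LA) / (1 + s1) ^ 2 < (s2 ^ 2 * LB + LA) / (1 + s2) ^ 2 := by
  have h2pos : 0 < s2 := h1.trans h12
  have d1 : (0:ℝ) < (1 + s1) ^ 2 := by positivity
  have d2 : (0:ℝ) < (1 + s2) ^ 2 := by positivity
  rw [div_lt_div_iff₀ d1 d2]
  have hs2 : LA < s2 * LB := lt_of_le_of_lt h2 (by nlinarith)
  nlinarith [mul_pos h1 h2pos, sub_pos.mpr h12,
    mul_lt_mul_of_pos_right hs2 (sub_pos.mpr h12),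
    mul_le_mul_of_nonneg_right h2 (sub_pos.mpr h12).le,
    mul_lt_mul_of_pos_right hs2 (mul_pos h1 (sub_pos.mpr h12)),
    mul_le_mul_of_nonneg_right h2 (mul_pos h2pos (sub_pos.mpr h12)).le]

/-- the scale-invariant team error `E(t) = (t^{2α}L_B + L_A)/(1+t^α)²`
is strictly decreasing before `t* = (L_A/L_B)^{1/α}`, strictly increasing after, and
attains its minimum value `L_A·L_B/(L_A+L_B)` at `t*`. -/
theorem stmt_15 (LA LB α : ℝ)
    (hLA : 0 < LA) (hLB : 0 < LB) (hα : 0 < α)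
    (E : ℝ → ℝ)
    (hE : ∀ t : ℝ, E t = (t ^ (2 * α) * LB + LA) / (1 + t ^ α) ^ 2)
    (tstar : ℝ) (htstar : tstar = (LA / LB) ^ (α⁻¹)) :
    StrictAntiOn E (Set.Ioo 0 tstar) ∧
    StrictMonoOn E (Set.Ioi tstar) ∧
    E tstar = LA * LB / (LA + LB) ∧
    (∀ t : ℝ, 0 < t → E tstar ≤ E t) := by
  have hAB : 0 < LA / LB := div_pos hLA hLB
  have htpos : 0 < tstar := htstar ▸ Real.rpow_pos_of_pos hAB _
  have hts : tstar ^ α = LA / LB := by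
    rw [htstar, ← Real.rpow_mul hAB.le, inv_mul_cancel₀ hα.ne', Real.rpow_one]
  have hmin : E tstar = LA * LB / (LA + LB) := by
    rw [hE, spow_aux tstar α htpos, hts]
    have h1 : (1 : ℝ) + LA / LB ≠ 0 := by positivity
    field_simp
    ring
  refine ⟨?_, ?_, hmin, ?_⟩
  · intro a ha b hb hab
    have hapos : 0 < a := ha.1
    have hbpos : 0 < b := hb.1
    have hs : a ^ α < b ^ α := Real.rpow_lt_rpow hapos.le hab hα
    have hble : b ^ α * LB ≤ LA := by
      have : b ^ α ≤ LA / LB := by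
        rw [← hts]; exact (Real.rpow_le_rpow hbpos.le hb.2.le hα.le)
      calc b ^ α * LB ≤ (LA / LB) * LB := by nlinarith
        _ = LA := by field_simp
    rw [hE a, hE b, spow_aux a α hapos, spow_aux b α hbpos]
    exact f_anti LA LB _ _ hLA hLB (Real.rpow_pos_of_pos hapos α) hs hble
  · intro a ha b hb hab
    have hapos : 0 < a := htpos.trans ha
    have hbpos : 0 < b := htpos.trans hb
    have hs : a ^ α < b ^ α := Real.rpow_lt_rpow hapos.le hab hα
    have hale : LA ≤ a ^ α * LB := by
      have : LA / LB ≤ a ^ α := by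
        rw [← hts]; exact Real.rpow_le_rpow htpos.le (le_of_lt ha) hα.le
      calc LA = (LA / LB) * LB := by field_simp
        _ ≤ a ^ α * LB := by nlinarith
    rw [hE a, hE b, spow_aux a α hapos, spow_aux b α hbpos]
    exact f_mono LA LB _ _ hLA hLB (Real.rpow_pos_of_pos hapos α) hs hale
  · intro t ht
    rw [hmin, hE t, spow_aux t α ht]
    have hspos : 0 < t ^ α := Real.rpow_pos_of_pos ht α
    have d2 : (0:ℝ) < (1 + t ^ α) ^ 2 := by positivity
    rw [div_le_div_iff₀ (by positivity) d2]
    nlinarith [sq_nonneg (t ^ α * LB - LA), hspos]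
end
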